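/- Let λ be a nonempty set and σ any automorphism of the semigroup of λ×λ matrix units B_λ. Then there exists a bijection φ : λ → λ such that σ(α, β) = (φ(α), φ(β)) for all α, β ∈ λ, and σ(0) = 0. -/

import Mathlib

/-- The semigroup of `Λ×Λ` matrix units `B_Λ`: its underlying set is
`(Λ × Λ) ∪ {0}`, where `none` plays the role of the zero `0`. -/
def MatrixUnits (Λ : Type*) : Type _ :=
  Option (Λ × Λ)

namespace MatrixUnits

variable {Λ : Type*}

instance : Zero (MatrixUnits Λ) := ⟨none⟩

open Classical in
/-- `(α, β)·(γ, δ) = (α, δ)` if `β = γ`, and `0` otherwise; `0` is a two-sided zero. -/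
noncomputable instance : Mul (MatrixUnits Λ) :=
  ⟨fun x y =>
    match x, y with
    | some (α, β), some (γ, δ) =>
        if β = γ then some (α, δ) else 0
    | _, _ => 0⟩

end MatrixUnits

/-- An automorphism of a semigroup: a bijective map preserving the multiplication. -/
def IsSemigroupAut {T : Type*} [Mul T] (σ : T → T) : Prop :=
  Function.Bijective σ ∧ ∀ x y : T, σ (x * y) = σ x * σ y

/-!
An automorphism `σ` of `B_Λ` fixes the zero, so it permutes the nonzero elements `(α, β)`.
Since `(α, β)·(β, γ) = (α, γ) ≠ 0`, the images of `(α, β)` and `(β, γ)` must again be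
composable, which forces `σ(α, β) = (φ α, φ β)` where `σ(α, α) = (φ α, φ α)`.
Bijectivity of `φ` is inherited from that of `σ`.
-/

theorem IsSemigroupAut.map_zero {T : Type*} [MulZeroClass T] {σ : T → T}
    (hσ : IsSemigroupAut σ) : σ 0 = 0 := by
  obtain ⟨x, hx⟩ := hσ.1.2 0
  simpa [hx] using hσ.2 0 x

theorem Prod.eq_fst_diag_of_snd_eq_fst {α β : Type*} {f : α × α → β × β}
    (h : ∀ a b c, (f (a, b)).2 = (f (b, c)).1) (a b : α) :
    f (a, b) = ((f (a, a)).1, (f (b, b)).1) :=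
  Prod.ext ((h a a b).symm.trans (h a a a)) (h a b b)

namespace MatrixUnits

variable {Λ : Type*}

-- A bare `some p` elaborates at type `Option (Λ × Λ)`, which carries no multiplication.
def of (p : Λ × Λ) : MatrixUnits Λ :=
  some p

theorem of_injective : Function.Injective (of : Λ × Λ → MatrixUnits Λ) :=
  Option.some_injective _

theorem of_ne_zero (p : Λ × Λ) : of p ≠ 0 :=
  Option.some_ne_none p

theorem eq_zero_or_exists_eq_of (x : MatrixUnits Λ) : x = 0 ∨ ∃ p, x = of p := by
  rcases x with _ | p
  exacts [.inl rfl, .inr ⟨p, rfl⟩]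

open Classical in
theorem of_mul_of (p q : Λ × Λ) : of p * of q = if p.2 = q.1 then of (p.1, q.2) else 0 :=
  rfl

theorem of_mul_of_ne_zero_iff (p q : Λ × Λ) : of p * of q ≠ 0 ↔ p.2 = q.1 := by
  classical
  rw [of_mul_of]
  split_ifs with h
  · exact iff_of_true (of_ne_zero _) h
  · exact iff_of_false (not_not.2 rfl) h

noncomputable instance : MulZeroClass (MatrixUnits Λ) :=
  { (inferInstance : Mul (MatrixUnits Λ)), (inferInstance : Zero (MatrixUnits Λ)) with
    zero_mul := fun _ => rfl
    mul_zero := fun x => by rcases x with _ | ⟨_, _⟩ <;> rfl }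

variable {σ : MatrixUnits Λ → MatrixUnits Λ}

theorem exists_map_of_eq_of (hσ : IsSemigroupAut σ) (p : Λ × Λ) :
    ∃ q, σ (of p) = of q := by
  refine (eq_zero_or_exists_eq_of _).resolve_left fun h => of_ne_zero p (hσ.1.1 ?_)
  rw [h, hσ.map_zero]

theorem map_of_mul_map_of_ne_zero (hσ : IsSemigroupAut σ) (a b c : Λ) :
    σ (of (a, b)) * σ (of (b, c)) ≠ 0 := by
  rw [← hσ.2, of_mul_of, if_pos rfl]
  obtain ⟨q, hq⟩ := exists_map_of_eq_of hσ (a, c)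
  exact hq ▸ of_ne_zero q

theorem bijective_of_map_of_eq (hσ : Function.Bijective σ) (hσ0 : σ 0 = 0) {φ : Λ → Λ}
    (hφ : ∀ a b, σ (of (a, b)) = of (φ a, φ b)) : Function.Bijective φ := by
  refine ⟨fun a b h => ?_, fun c => ?_⟩
  · exact congrArg Prod.fst (of_injective (hσ.1 ((hφ a a).trans (h ▸ hφ b b).symm)))
  · obtain ⟨x, hx⟩ := hσ.2 (of (c, c))
    obtain rfl | ⟨⟨a, b⟩, rfl⟩ := eq_zero_or_exists_eq_of x
    · exact absurd (hσ0.symm.trans hx) (of_ne_zero _).symm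
    · exact ⟨a, congrArg Prod.fst (of_injective ((hφ a b).symm.trans hx))⟩

end MatrixUnits

open MatrixUnits in
theorem stmt_5_general {Λ : Type*}
    (σ : MatrixUnits Λ → MatrixUnits Λ) (hσ : IsSemigroupAut σ) :
    ∃ φ : Λ ≃ Λ, (∀ α β : Λ, σ (some (α, β)) = some (φ α, φ β)) ∧ σ 0 = 0 := by
  choose f hf using exists_map_of_eq_of hσ
  have hf_comp : ∀ a b c, (f (a, b)).2 = (f (b, c)).1 := fun a b c => by
    simpa only [hf, of_mul_of_ne_zero_iff] using map_of_mul_map_of_ne_zero hσ a b c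
  have hσφ : ∀ a b, σ (of (a, b)) = of ((f (a, a)).1, (f (b, b)).1) := fun a b => by
    rw [hf, Prod.eq_fst_diag_of_snd_eq_fst hf_comp]
  exact ⟨.ofBijective _ (bijective_of_map_of_eq hσ.1 hσ.map_zero hσφ), hσφ, hσ.map_zero⟩

/-- Let `Λ` be a nonempty set and `σ` any automorphism of the semigroup of `Λ×Λ`
matrix units `B_Λ`. Then there exists a bijection `φ : Λ → Λ` such that
`σ(α, β) = (φ(α), φ(β))` for all `α, β ∈ Λ`, and `σ(0) = 0`. -/
theorem stmt_5 {Λ : Type*} [Nonempty Λ]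
    (σ : MatrixUnits Λ → MatrixUnits Λ) (hσ : IsSemigroupAut σ) :
    ∃ φ : Λ ≃ Λ, (∀ α β : Λ, σ (some (α, β)) = some (φ α, φ β)) ∧ σ 0 = 0 :=
  stmt_5_general σ hσ
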